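/- arXiv:2510.13613 — 3 statements merged into one kernel-verified Lean document; each statement's English description precedes it below -/
import Mathlib

section
/- For e ≥ 1, the code D = {(1,1), (e+2,e+2), (2e+3,2e+3), (1,2e+3), (2e+3,1)} is an e-quasi-perfect code in P_{2e+3} □ P_{2e+3}: distinct codewords are at distance at least 2e+2, and the covering radius of D is exactly e+1. -/
/-!
In the ℓ¹ grid distance, a vertex `v` lying in the box spanned by two vertices `q` and `r` satisfies
`d(q, v) + d(v, r) = d(q, r)`. Every vertex lies in the box spanned by the center `(e+2, e+2)` and
the corner of its quadrant, which is at distance `2e+2` from the center, so `v` is within `e+1` of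
one of the two. The midpoint `(1, e+2)` of a side is at distance exactly `e+1` from the center and
from the two nearest corners. The packing bound is a direct computation: the closest pairs of
codewords (the center and a corner, or two adjacent corners) are at distance exactly `2e+2`.
-/

/-- Distance between labels on a path: `|x - y|`. -/
def pathDist (x y : ℕ) : ℕ := ((x : ℤ) - y).natAbs

def gridDist (p q : ℕ × ℕ) : ℕ := pathDist p.1 q.1 + pathDist p.2 q.2

def centerAndCorners (e : ℕ) : Set (ℕ × ℕ) :=
  {(1, 1), (e + 2, e + 2), (2 * e + 3, 2 * e + 3), (1, 2 * e + 3), (2 * e + 3, 1)}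

theorem pathDist_comm (x y : ℕ) : pathDist x y = pathDist y x := by
  unfold pathDist
  omega

theorem gridDist_comm (p q : ℕ × ℕ) : gridDist p q = gridDist q p := by
  rw [gridDist, gridDist, pathDist_comm p.1, pathDist_comm p.2]

theorem pathDist_add_pathDist_of_mem_uIcc {x y z : ℕ} (h : x ∈ Set.uIcc y z) :
    pathDist y x + pathDist x z = pathDist y z := by
  rw [Set.mem_uIcc] at h
  unfold pathDist
  omega

theorem gridDist_add_gridDist_of_mem_uIcc {p q r : ℕ × ℕ} (h : p ∈ Set.uIcc q r) :
    gridDist q p + gridDist p r = gridDist q r := by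
  rw [Set.uIcc_prod_eq, Set.mem_prod] at h
  rw [gridDist, gridDist, gridDist, ← pathDist_add_pathDist_of_mem_uIcc h.1,
    ← pathDist_add_pathDist_of_mem_uIcc h.2]
  ring

theorem centerAndCorners_pairwise (e : ℕ) :
    (centerAndCorners e).Pairwise fun p q => 2 * e + 2 ≤ gridDist p q := by
  simp only [centerAndCorners, Set.pairwise_insert, Set.pairwise_singleton, Set.mem_insert_iff,
    Set.mem_singleton_iff, forall_eq_or_imp, forall_eq, ne_eq, Prod.mk.injEq, true_and, and_true,
    gridDist, pathDist]
  omega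

theorem centerAndCorners_covers (e : ℕ) {v : ℕ × ℕ} (hv₁ : v.1 ∈ Set.Icc 1 (2 * e + 3))
    (hv₂ : v.2 ∈ Set.Icc 1 (2 * e + 3)) :
    ∃ d ∈ centerAndCorners e, gridDist v d ≤ e + 1 := by
  have h_side : ∀ x ∈ Set.Icc 1 (2 * e + 3),
      ∃ c, (c = 1 ∨ c = 2 * e + 3) ∧ x ∈ Set.uIcc (e + 2) c := fun x hx =>
    (Set.uIcc_subset_uIcc_union_uIcc (b := e + 2) (Set.Icc_subset_uIcc hx)).elim
      (fun h => ⟨1, .inl rfl, Set.uIcc_comm 1 (e + 2) ▸ h⟩) (⟨_, .inr rfl, ·⟩)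
  obtain ⟨c₁, hc₁, h₁⟩ := h_side v.1 hv₁
  obtain ⟨c₂, hc₂, h₂⟩ := h_side v.2 hv₂
  have h_between : v ∈ Set.uIcc (e + 2, e + 2) (c₁, c₂) := by
    rw [Set.uIcc_prod_eq, Set.mem_prod]
    exact ⟨h₁, h₂⟩
  have h_split := gridDist_add_gridDist_of_mem_uIcc h_between
  have h_corner : (c₁, c₂) ∈ centerAndCorners e := by
    rcases hc₁ with rfl | rfl <;> rcases hc₂ with rfl | rfl <;> simp [centerAndCorners]
  have h_diam : gridDist (e + 2, e + 2) (c₁, c₂) = 2 * e + 2 := by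
    simp only [gridDist, pathDist]
    omega
  rw [gridDist_comm] at h_split
  by_cases h_near : gridDist v (e + 2, e + 2) ≤ e + 1
  · exact ⟨_, by simp [centerAndCorners], h_near⟩
  · exact ⟨_, h_corner, by omega⟩

theorem centerAndCorners_far_from_side_midpoint (e : ℕ) :
    ∀ d ∈ centerAndCorners e, e + 1 ≤ gridDist (1, e + 2) d := by
  simp only [centerAndCorners, Set.mem_insert_iff, Set.mem_singleton_iff, forall_eq_or_imp,
    forall_eq, gridDist, pathDist]
  omega

theorem quasi_perfect_in_P2e3_box_P2e3_general (e : ℕ) :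
    -- vertex set of P_{2e+3} □ P_{2e+3}, with labels 1,…,2e+3
    let V : Set (ℕ × ℕ) :=
      {p | 1 ≤ p.1 ∧ p.1 ≤ 2 * e + 3 ∧ 1 ≤ p.2 ∧ p.2 ≤ 2 * e + 3}
    let dist : ℕ × ℕ → ℕ × ℕ → ℕ :=
      fun p q => pathDist p.1 q.1 + pathDist p.2 q.2
    let D : Set (ℕ × ℕ) :=
      {(1, 1), (e + 2, e + 2), (2 * e + 3, 2 * e + 3), (1, 2 * e + 3), (2 * e + 3, 1)}
    -- distinct codewords are at distance at least 2e+2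
    (∀ p ∈ D, ∀ q ∈ D, p ≠ q → 2 * e + 2 ≤ dist p q) ∧
    -- covering radius exactly e+1
    (∀ v ∈ V, ∃ d ∈ D, dist v d ≤ e + 1) ∧
    (∃ v ∈ V, ∀ d ∈ D, e + 1 ≤ dist v d) := by
  intro V dist D
  refine ⟨fun p hp q hq => centerAndCorners_pairwise e hp hq, ?_, ?_⟩
  · rintro v ⟨h₁, h₂, h₃, h₄⟩
    exact centerAndCorners_covers e ⟨h₁, h₂⟩ ⟨h₃, h₄⟩
  · exact ⟨(1, e + 2), ⟨le_rfl, by omega, by omega, by omega⟩,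
      centerAndCorners_far_from_side_midpoint e⟩

theorem quasi_perfect_in_P2e3_box_P2e3 (e : ℕ) (he : 1 ≤ e) :
    -- vertex set of P_{2e+3} □ P_{2e+3}, with labels 1,…,2e+3
    let V : Set (ℕ × ℕ) :=
      {p | 1 ≤ p.1 ∧ p.1 ≤ 2 * e + 3 ∧ 1 ≤ p.2 ∧ p.2 ≤ 2 * e + 3}
    let dist : ℕ × ℕ → ℕ × ℕ → ℕ :=
      fun p q => pathDist p.1 q.1 + pathDist p.2 q.2
    let D : Set (ℕ × ℕ) :=
      {(1, 1), (e + 2, e + 2), (2 * e + 3, 2 * e + 3), (1, 2 * e + 3), (2 * e + 3, 1)}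
    -- distinct codewords are at distance at least 2e+2
    (∀ p ∈ D, ∀ q ∈ D, p ≠ q → 2 * e + 2 ≤ dist p q) ∧
    -- covering radius exactly e+1
    (∀ v ∈ V, ∃ d ∈ D, dist v d ≤ e + 1) ∧
    (∃ v ∈ V, ∀ d ∈ D, e + 1 ≤ dist v d) :=
  quasi_perfect_in_P2e3_box_P2e3_general e
end

section
/- For all n ≥ 2, the set D = {(0,0,0), (n−1,n−1,2)} is an (n−1)-quasi-perfect code in P_n □ P_n □ P_3: the codewords are at distance 2n, and the covering radius of D is exactly n. -/
lemma pathDist_self (x : ℕ) : pathDist x x = 0 := by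
  simp [pathDist]

lemma pathDist_zero_add_pathDist_of_le {x m : ℕ} (h : x ≤ m) :
    pathDist x 0 + pathDist x m = m := by
  unfold pathDist
  omega

/-- `P_a □ P_b □ P_c` is the box `[0, a-1] × [0, b-1] × [0, c-1]` in `ℕ³` with this metric. -/
def l1Dist (p q : ℕ × ℕ × ℕ) : ℕ :=
  pathDist p.1 q.1 + pathDist p.2.1 q.2.1 + pathDist p.2.2 q.2.2

lemma l1Dist_self (p : ℕ × ℕ × ℕ) : l1Dist p p = 0 := by
  simp [l1Dist, pathDist_self]

lemma l1Dist_zero_add_l1Dist_of_le {p m : ℕ × ℕ × ℕ} (h : p ≤ m) :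
    l1Dist p 0 + l1Dist p m = m.1 + m.2.1 + m.2.2 := by
  obtain ⟨h₁, h₂, h₃⟩ : p.1 ≤ m.1 ∧ p.2.1 ≤ m.2.1 ∧ p.2.2 ≤ m.2.2 := h
  have := pathDist_zero_add_pathDist_of_le h₁
  have := pathDist_zero_add_pathDist_of_le h₂
  have := pathDist_zero_add_pathDist_of_le h₃
  simp only [l1Dist, Prod.fst_zero, Prod.snd_zero]
  omega

def gridCoords {a b c : ℕ} (v : Fin a × Fin b × Fin c) : ℕ × ℕ × ℕ :=
  (v.1, v.2.1, v.2.2)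

lemma gridCoords_le {a b c : ℕ} (v : Fin a × Fin b × Fin c) :
    gridCoords v ≤ (a - 1, b - 1, c - 1) :=
  Prod.mk_le_mk.2 ⟨Nat.le_sub_one_of_lt v.1.isLt,
    Prod.mk_le_mk.2 ⟨Nat.le_sub_one_of_lt v.2.1.isLt, Nat.le_sub_one_of_lt v.2.2.isLt⟩⟩

theorem quasi_perfect_code_in_Pn_Pn_P3 (n : ℕ) (hn : 2 ≤ n) :
    -- L1 distance in P_n □ P_n □ P_3
    let dist : Fin n × Fin n × Fin 3 → Fin n × Fin n × Fin 3 → ℕ :=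
      fun p q => pathDist p.1.val q.1.val + pathDist p.2.1.val q.2.1.val +
        pathDist p.2.2.val q.2.2.val
    let c0 : Fin n × Fin n × Fin 3 := (⟨0, by omega⟩, ⟨0, by omega⟩, 0)
    let c1 : Fin n × Fin n × Fin 3 := (⟨n - 1, by omega⟩, ⟨n - 1, by omega⟩, 2)
    let D : Set (Fin n × Fin n × Fin 3) := {c0, c1}
    -- the two codewords are at distance 2n
    dist c0 c1 = 2 * n ∧
    -- covering radius exactly n
    (∀ v : Fin n × Fin n × Fin 3, ∃ d ∈ D, dist v d ≤ n) ∧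
    (∃ v : Fin n × Fin n × Fin 3, ∀ d ∈ D, n ≤ dist v d) := by
  intro dist c0 c1 D
  have sum_eq (v : Fin n × Fin n × Fin 3) : dist v c0 + dist v c1 = 2 * n := by
    calc dist v c0 + dist v c1
        = l1Dist (gridCoords v) 0 + l1Dist (gridCoords v) (n - 1, n - 1, 2) := rfl
      _ = n - 1 + (n - 1) + 2 := l1Dist_zero_add_l1Dist_of_le (gridCoords_le v)
      _ = 2 * n := by omega
  refine ⟨?_, fun v => ?_, ?_⟩
  · have := sum_eq c0
    have : dist c0 c0 = 0 := l1Dist_self (gridCoords c0)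
    omega
  · by_cases h : dist v c0 ≤ n
    · exact ⟨c0, Or.inl rfl, h⟩
    · exact ⟨c1, Or.inr rfl, by have := sum_eq v; omega⟩
  · let w : Fin n × Fin n × Fin 3 := (⟨n - 1, by omega⟩, ⟨1, by omega⟩, 0)
    have hw : dist w c0 = n := by
      simp only [dist, w, c0, pathDist]
      omega
    have := sum_eq w
    refine ⟨w, ?_⟩
    rintro d (rfl | rfl) <;> omega
end

section
/- For each n with 14 ≤ n ≤ 19, the set D = {(2i mod n, 3i mod n) : 0 ≤ i < n} is a quasi-perfect 2-error-correcting code in C_n □ C_n: distinct codewords are at distance at least 5 and the covering radius of D is exactly 3. -/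
/-- Cyclic distance on `Z_n`: `min (|x - y|, n - |x - y|)`. -/
def cycDist (n x y : ℕ) : ℕ := min ((x : ℤ) - y).natAbs (n - ((x : ℤ) - y).natAbs)

/-! The code `{(2k, 3k)}` is the kernel of the syndrome map `(x, y) ↦ 3x - 2y` on `(ℤ/n)²`, and
the cosets of the code are its fibres. Lifting each coordinate to its representative of least
absolute value turns the Lee distance into `|a| + |b|` for integers `a, b`.

A nonzero codeword `(2k, 3k)` of weight at most 4 would lift to integers with `|a| + |b| ≤ 4` and
`n ∣ 3a - 2b`; as `|3a - 2b| ≤ 12 < n`, this forces `3a = 2b`, hence `a = b = 0`. The 13 points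
of weight at most 2 have at most 13 syndromes, so for `n ≥ 14` some coset `(t, t) + D` avoids the
ball of radius 2. Conversely the syndromes `3a - 2b` with `|a| + |b| ≤ 3` fill the integers in
`[-9, 9]`, which represent every residue when `n ≤ 19`. -/

namespace ZMod

variable {n : ℕ}

def leeWeight (x : ZMod n) : ℕ := x.valMinAbs.natAbs

lemma leeWeight_intCast_le (a : ℤ) : leeWeight (a : ZMod n) ≤ a.natAbs := by
  rcases eq_zero_or_neZero n with rfl | _
  · rfl
  exact natAbs_min_of_le_div_two n _ _ (coe_valMinAbs _) (natAbs_valMinAbs_le _)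

lemma natCast_finVal_injective : Function.Injective fun x : Fin n => ((x : ℕ) : ZMod n) :=
  fun x y h => Fin.ext <| by
    simpa [val_natCast_of_lt x.isLt, val_natCast_of_lt y.isLt] using congrArg val h

lemma natCast_finVal_eq_natCast_iff (x : Fin n) (m : ℕ) :
    ((x : ℕ) : ZMod n) = m ↔ (x : ℕ) = m % n := by
  rw [natCast_eq_natCast_iff', Nat.mod_eq_of_lt x.isLt]

end ZMod

open ZMod

variable {n : ℕ}

lemma cycDist_eq_leeWeight_sub {x y : ℕ} (hx : x < n) (hy : y < n) :
    cycDist n x y = leeWeight (x - y : ZMod n) := by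
  have : NeZero n := ⟨by omega⟩
  wlog h : y ≤ x generalizing x y
  · rw [leeWeight, ← neg_sub, natAbs_valMinAbs_neg, ← leeWeight, ← this hy hx (by omega),
      cycDist, cycDist]
    omega
  rw [leeWeight, valMinAbs_natAbs_eq_min, ← Nat.cast_sub h, val_natCast,
    Nat.mod_eq_of_lt (by omega), cycDist]
  omega

lemma mem_code_iff [NeZero n] (p : Fin n × Fin n) :
    (∃ i < n, p.1.val = 2 * i % n ∧ p.2.val = 3 * i % n) ↔
      ∃ k : ZMod n, ((p.1 : ℕ) : ZMod n) = 2 * k ∧ ((p.2 : ℕ) : ZMod n) = 3 * k := by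
  constructor
  · rintro ⟨i, -, h1, h2⟩
    exact ⟨i, by rw [h1, natCast_mod, Nat.cast_mul, Nat.cast_ofNat],
      by rw [h2, natCast_mod, Nat.cast_mul, Nat.cast_ofNat]⟩
  · rintro ⟨k, h1, h2⟩
    refine ⟨k.val, k.val_lt, ?_, ?_⟩ <;>
      rw [← natCast_finVal_eq_natCast_iff] <;> push_cast [natCast_zmod_val] <;> assumption

theorem five_le_leeWeight_two_mul_add_three_mul (hn : 13 ≤ n) {k : ZMod n} (hk : k ≠ 0) :
    5 ≤ leeWeight (2 * k) + leeWeight (3 * k) := by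
  by_contra! h
  have h2 := coe_valMinAbs (2 * k)
  have h3 := coe_valMinAbs (3 * k)
  simp only [leeWeight] at h
  generalize (2 * k).valMinAbs = a at h h2
  generalize (3 * k).valMinAbs = b at h h3
  have hk_eq : k = (b - a : ℤ) := by push_cast; linear_combination h2 - h3
  have hdvd : (n : ℤ) ∣ 3 * a - 2 * b := by
    rw [← intCast_zmod_eq_zero_iff_dvd]
    push_cast
    linear_combination 3 * h2 - 2 * h3
  have hab := Int.eq_zero_of_abs_lt_dvd hdvd (by rw [abs_lt]; omega)
  exact hk (by rw [hk_eq, show b - a = 0 by omega, Int.cast_zero])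

theorem exists_leeWeight_sub_add_le_three [NeZero n] (hn : n ≤ 19) (x y : ZMod n) :
    ∃ k : ZMod n, leeWeight (x - 2 * k) + leeWeight (y - 3 * k) ≤ 3 := by
  have hsyndrome : ∀ r ∈ Finset.Icc (-9 : ℤ) 9, ∃ a ∈ Finset.Icc (-3 : ℤ) 3,
      ∃ b ∈ Finset.Icc (-3 : ℤ) 3, a.natAbs + b.natAbs ≤ 3 ∧ 3 * a - 2 * b = r := by
    decide
  have hsmall := natAbs_valMinAbs_le (3 * x - 2 * y)
  obtain ⟨a, -, b, -, hab, hr⟩ :=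
    hsyndrome (3 * x - 2 * y).valMinAbs (Finset.mem_Icc.mpr (by omega))
  have hxy : 3 * x - 2 * y = ((3 * a - 2 * b : ℤ) : ZMod n) := by rw [hr, coe_valMinAbs]
  push_cast at hxy
  refine ⟨(y - b) - (x - a), ?_⟩
  rw [show x - 2 * ((y - b) - (x - a)) = a by linear_combination hxy,
    show y - 3 * ((y - b) - (x - a)) = b by linear_combination hxy]
  exact (add_le_add (leeWeight_intCast_le a) (leeWeight_intCast_le b)).trans hab

theorem exists_forall_three_le_leeWeight_sub_add [NeZero n] (hn : 14 ≤ n) :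
    ∃ x y : ZMod n, ∀ k, 3 ≤ leeWeight (x - 2 * k) + leeWeight (y - 3 * k) := by
  let ball : Finset (ℤ × ℤ) := (Finset.Icc (-2) 2 ×ˢ Finset.Icc (-2) 2).filter
    fun p => p.1.natAbs + p.2.natAbs ≤ 2
  have hball : ball.card = 13 := by decide
  let syndromes := ball.image fun p => ((3 * p.1 - 2 * p.2 : ℤ) : ZMod n)
  have hcard : syndromes.card < (Finset.univ : Finset (ZMod n)).card := by
    rw [Finset.card_univ, ZMod.card]
    exact (Finset.card_image_le.trans hball.le).trans_lt (by omega)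
  obtain ⟨t, -, ht⟩ := Finset.exists_mem_notMem_of_card_lt_card hcard
  refine ⟨t, t, fun k => ?_⟩
  by_contra! h
  refine ht (Finset.mem_image.mpr ⟨((t - 2 * k).valMinAbs, (t - 3 * k).valMinAbs), ?_, ?_⟩)
  · simp only [leeWeight] at h
    simp only [ball, Finset.mem_filter, Finset.mem_product, Finset.mem_Icc]
    omega
  · push_cast [coe_valMinAbs]
    ring

theorem quasi_perfect_code_in_Cn_Cn_14_19 (n : ℕ) (hn : 14 ≤ n) (hn' : n ≤ 19) :
    -- distance in C_n □ C_n
    let dist : Fin n × Fin n → Fin n × Fin n → ℕ :=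
      fun p q => cycDist n p.1.val q.1.val + cycDist n p.2.val q.2.val
    -- D = {(2i mod n, 3i mod n) : 0 ≤ i < n}
    let D : Set (Fin n × Fin n) :=
      {p | ∃ i < n, p.1.val = (2 * i) % n ∧ p.2.val = (3 * i) % n}
    -- distinct codewords are at distance at least 5
    (∀ p ∈ D, ∀ q ∈ D, p ≠ q → 5 ≤ dist p q) ∧
    -- covering radius exactly 3
    (∀ v : Fin n × Fin n, ∃ d ∈ D, dist v d ≤ 3) ∧
    (∃ v : Fin n × Fin n, ∀ d ∈ D, 3 ≤ dist v d) := by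
  intro dist D
  have : NeZero n := ⟨by omega⟩
  have hdist (p q : Fin n × Fin n) : dist p q =
      leeWeight ((p.1 : ℕ) - (q.1 : ℕ) : ZMod n) + leeWeight ((p.2 : ℕ) - (q.2 : ℕ) : ZMod n) := by
    simp only [dist, cycDist_eq_leeWeight_sub p.1.isLt q.1.isLt,
      cycDist_eq_leeWeight_sub p.2.isLt q.2.isLt]
  refine ⟨?_, ?_, ?_⟩
  · rintro p hp q hq hpq
    obtain ⟨i, hp1, hp2⟩ := (mem_code_iff p).mp hp
    obtain ⟨j, hq1, hq2⟩ := (mem_code_iff q).mp hq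
    rw [hdist, hp1, hp2, hq1, hq2, ← mul_sub, ← mul_sub]
    refine five_le_leeWeight_two_mul_add_three_mul (by omega) (sub_ne_zero.mpr fun hij => hpq ?_)
    exact Prod.ext (natCast_finVal_injective (by simp only [hp1, hq1, hij]))
      (natCast_finVal_injective (by simp only [hp2, hq2, hij]))
  · rintro ⟨x, y⟩
    obtain ⟨k, hk⟩ := exists_leeWeight_sub_add_le_three hn' (x : ℕ) (y : ℕ)
    refine ⟨(⟨(2 * k).val, val_lt _⟩, ⟨(3 * k).val, val_lt _⟩),
      (mem_code_iff _).mpr ⟨k, natCast_zmod_val _, natCast_zmod_val _⟩, ?_⟩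
    rwa [hdist, natCast_zmod_val, natCast_zmod_val]
  · obtain ⟨x, y, h⟩ := exists_forall_three_le_leeWeight_sub_add (n := n) hn
    refine ⟨(⟨x.val, x.val_lt⟩, ⟨y.val, y.val_lt⟩), fun d hd => ?_⟩
    obtain ⟨k, h1, h2⟩ := (mem_code_iff d).mp hd
    rw [hdist, h1, h2, natCast_zmod_val, natCast_zmod_val]
    exact h k
end
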